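/- For every complex number q with 0 < |q| < 1 and all natural numbers a, b ≥ 0, one has Σ_{n₁,n₂ ≥ 0} q^{n₁n₂+(a+1)n₁+(b+1)n₂} / ((q)_{n₁}(q)_{n₂}) = 1/( (q^{b+1};q)_{a+1} · (q^{a+1};q)_∞ ), and this also equals 1/( (q^{a+1};q)_{b+1} · (q^{b+1};q)_∞ ). -/

import Mathlib

/-- The finite q-Pochhammer symbol `(q)_n = ∏_{j=1}^n (1 - q^j)`. -/
noncomputable def qp (q : ℂ) (n : ℕ) : ℂ := ∏ j ∈ Finset.range n, (1 - q ^ (j + 1))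

/-- The infinite q-Pochhammer symbol `(q)_∞ = ∏_{j=1}^∞ (1 - q^j)`. -/
noncomputable def qpInf (q : ℂ) : ℂ := ∏' j : ℕ, (1 - q ^ (j + 1))

/-- The general finite q-Pochhammer symbol `(x;q)_m = ∏_{j=0}^{m-1} (1 - x q^j)`. -/
noncomputable def qpg (q x : ℂ) (m : ℕ) : ℂ := ∏ j ∈ Finset.range m, (1 - x * q ^ j)

/-- The general infinite q-Pochhammer symbol `(x;q)_∞ = ∏_{j=0}^{∞} (1 - x q^j)`. -/
noncomputable def qpgInf (q x : ℂ) : ℂ := ∏' j : ℕ, (1 - x * q ^ j)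

/-!
Write `u = q^(a+1)` and `v = q^(b+1)`. For fixed `n₁` the inner sum is Euler's series
`∑ z^n / (q)_n = 1 / (z;q)_∞` at `z = v q^(n₁)`, and `(v;q)_∞ = (v;q)_(n₁) (v q^(n₁);q)_∞` turns the
double sum into `(v;q)_∞⁻¹ ∑ (v;q)_n u^n / (q)_n`. By the q-binomial theorem this is
`(uv;q)_∞ / ((u;q)_∞ (v;q)_∞)`, and splitting off `(v;q)_(a+1)` or `(u;q)_(b+1)` from the
denominator gives the two closed forms.

The q-binomial theorem `(t;q)_∞ ∑ (x;q)_n t^n / (q)_n = (xt;q)_∞` comes from the functional equation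
`(1 - t) F(t) = (1 - xt) F(qt)` of the series `F`: iterating it `N` times and letting `N → ∞`,
`F(q^N t) → F(0) = 1`.
-/

open Filter Topology

variable {q x t : ℂ}

theorem summable_norm_mul_pow (hq : ‖q‖ < 1) (x : ℂ) : Summable fun j : ℕ => ‖x * q ^ j‖ := by
  simpa [norm_mul, norm_pow] using (summable_geometric_of_lt_one (norm_nonneg q) hq).mul_left ‖x‖

theorem norm_mul_pow_lt_one (hq : ‖q‖ < 1) (hx : ‖x‖ < 1) (j : ℕ) : ‖x * q ^ j‖ < 1 := by
  rw [norm_mul, norm_pow]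
  exact (mul_le_of_le_one_right (norm_nonneg x) (pow_le_one₀ (norm_nonneg q) hq.le)).trans_lt hx

theorem norm_pow_succ_lt_one (hq : ‖q‖ < 1) (k : ℕ) : ‖q ^ (k + 1)‖ < 1 := by
  rw [norm_pow]; exact pow_lt_one₀ (norm_nonneg q) hq k.succ_ne_zero

theorem one_sub_ne_zero_of_norm_lt_one {z : ℂ} (hz : ‖z‖ < 1) : 1 - z ≠ 0 :=
  sub_ne_zero.2 fun h => by simp [← h] at hz

theorem multipliable_one_sub_mul_pow (hq : ‖q‖ < 1) (x : ℂ) :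
    Multipliable fun j : ℕ => 1 - x * q ^ j := by
  simpa [sub_eq_add_neg] using multipliable_one_add_of_summable (f := fun j : ℕ => -(x * q ^ j))
    (by simpa using summable_norm_mul_pow hq x)

theorem tendsto_qpg_atTop (hq : ‖q‖ < 1) (x : ℂ) :
    Tendsto (qpg q x) atTop (𝓝 (qpgInf q x)) :=
  (multipliable_one_sub_mul_pow hq x).hasProd.tendsto_prod_nat

theorem qpg_ne_zero (hq : ‖q‖ < 1) (hx : ‖x‖ < 1) (n : ℕ) : qpg q x n ≠ 0 :=
  Finset.prod_ne_zero_iff.2 fun j _ => one_sub_ne_zero_of_norm_lt_one (norm_mul_pow_lt_one hq hx j)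

theorem qpgInf_ne_zero (hq : ‖q‖ < 1) (hx : ‖x‖ < 1) : qpgInf q x ≠ 0 := by
  simpa [qpgInf, sub_eq_add_neg] using tprod_one_add_ne_zero_of_summable
    (f := fun j : ℕ => -(x * q ^ j))
    (fun j => by
      simpa [← sub_eq_add_neg] using one_sub_ne_zero_of_norm_lt_one (norm_mul_pow_lt_one hq hx j))
    (by simpa using summable_norm_mul_pow hq x)

theorem qpgInf_eq_qpg_mul_qpgInf (hq : ‖q‖ < 1) (x : ℂ) (n : ℕ) :
    qpgInf q x = qpg q x n * qpgInf q (x * q ^ n) := by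
  have hshift : (fun i : ℕ => 1 - x * q ^ (i + n)) = fun i => 1 - x * q ^ n * q ^ i := by
    funext i; ring
  have h := Multipliable.prod_mul_tprod_nat_mul' (f := fun j : ℕ => 1 - x * q ^ j) (k := n)
    (hshift ▸ multipliable_one_sub_mul_pow hq (x * q ^ n))
  rw [hshift] at h
  exact h.symm

theorem qp_eq_qpg (q : ℂ) (n : ℕ) : qp q n = qpg q q n :=
  Finset.prod_congr rfl fun j _ => by rw [pow_succ']

noncomputable def qBinomCoeff (q x : ℂ) (n : ℕ) : ℂ := qpg q x n / qp q n

noncomputable def qBinomSeries (q x t : ℂ) : ℂ := ∑' n, qBinomCoeff q x n * t ^ n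

theorem qBinomCoeff_zero (q x : ℂ) : qBinomCoeff q x 0 = 1 := by
  simp [qBinomCoeff, qpg, qp]

theorem qBinomCoeff_succ_mul (hq : ‖q‖ < 1) (x : ℂ) (n : ℕ) :
    qBinomCoeff q x (n + 1) * (1 - q ^ (n + 1)) = qBinomCoeff q x n * (1 - x * q ^ n) := by
  have hqp : qp q n ≠ 0 := qp_eq_qpg q n ▸ qpg_ne_zero hq hq n
  have hfac : 1 - q ^ (n + 1) ≠ 0 := one_sub_ne_zero_of_norm_lt_one (norm_pow_succ_lt_one hq n)
  simp only [qBinomCoeff, qp, qpg, Finset.prod_range_succ] at hqp ⊢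
  field_simp

theorem exists_norm_qBinomCoeff_le (hq : ‖q‖ < 1) (x : ℂ) : ∃ C, ∀ n, ‖qBinomCoeff q x n‖ ≤ C := by
  have hlim : Tendsto (qBinomCoeff q x) atTop (𝓝 (qpgInf q x / qpgInf q q)) := by
    refine ((tendsto_qpg_atTop hq x).div (tendsto_qpg_atTop hq q) (qpgInf_ne_zero hq hq)).congr
      fun n => ?_
    simp [qBinomCoeff, qp_eq_qpg]
  obtain ⟨C, hC⟩ := isBounded_iff_forall_norm_le.1 (Metric.isBounded_range_of_tendsto _ hlim)
  exact ⟨C, fun n => hC _ ⟨n, rfl⟩⟩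

theorem summable_qBinomCoeff_mul_pow (hq : ‖q‖ < 1) (x : ℂ) (ht : ‖t‖ < 1) :
    Summable fun n => qBinomCoeff q x n * t ^ n := by
  obtain ⟨C, hC⟩ := exists_norm_qBinomCoeff_le hq x
  refine .of_norm_bounded ((summable_geometric_of_lt_one (norm_nonneg t) ht).mul_left C) fun n => ?_
  rw [norm_mul, norm_pow]
  exact mul_le_mul_of_nonneg_right (hC n) (by positivity)

theorem one_sub_mul_qBinomSeries (hq : ‖q‖ < 1) (x : ℂ) (ht : ‖t‖ < 1) :
    (1 - t) * qBinomSeries q x t = (1 - x * t) * qBinomSeries q x (q * t) := by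
  have hqt : ‖q * t‖ < 1 := by simpa [mul_comm] using norm_mul_pow_lt_one hq ht 1
  have hf := summable_qBinomCoeff_mul_pow hq x ht
  have hg := summable_qBinomCoeff_mul_pow hq x hqt
  -- compare coefficients of `t ^ (n + 1)`; the constant terms cancel
  have hstep (n : ℕ) : qBinomCoeff q x (n + 1) * t ^ (n + 1)
      - qBinomCoeff q x (n + 1) * (q * t) ^ (n + 1)
      = t * (qBinomCoeff q x n * t ^ n) - x * t * (qBinomCoeff q x n * (q * t) ^ n) := by
    linear_combination t ^ (n + 1) * qBinomCoeff_succ_mul hq x n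
  have key : qBinomSeries q x t - qBinomSeries q x (q * t)
      = t * qBinomSeries q x t - x * t * qBinomSeries q x (q * t) := by
    rw [qBinomSeries, qBinomSeries, ← hf.tsum_sub hg, (hf.sub hg).tsum_eq_zero_add,
      ← tsum_mul_left, ← tsum_mul_left, ← (hf.mul_left t).tsum_sub (hg.mul_left (x * t))]
    simp [hstep]
  linear_combination key

theorem qpg_mul_qBinomSeries (hq : ‖q‖ < 1) (x : ℂ) (ht : ‖t‖ < 1) (N : ℕ) :
    qpg q t N * qBinomSeries q x t = qpg q (x * t) N * qBinomSeries q x (q ^ N * t) := by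
  induction N with
  | zero => simp [qpg]
  | succ N ih =>
    have hstep := one_sub_mul_qBinomSeries (t := q ^ N * t) hq x
      (by rw [mul_comm]; exact norm_mul_pow_lt_one hq ht N)
    rw [show q * (q ^ N * t) = q ^ (N + 1) * t by ring] at hstep
    simp only [qpg, Finset.prod_range_succ] at ih ⊢
    linear_combination (1 - t * q ^ N) * ih + (∏ j ∈ Finset.range N, (1 - x * t * q ^ j)) * hstep

theorem tendsto_qBinomSeries_pow_mul (hq : ‖q‖ < 1) (x : ℂ) (ht : ‖t‖ < 1) :
    Tendsto (fun N : ℕ => qBinomSeries q x (q ^ N * t)) atTop (𝓝 1) := by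
  obtain ⟨C, hC⟩ := exists_norm_qBinomCoeff_le hq x
  have hterm (n : ℕ) : Tendsto (fun N : ℕ => qBinomCoeff q x n * (q ^ N * t) ^ n) atTop
      (𝓝 (qBinomCoeff q x n * (0 * t) ^ n)) :=
    (((tendsto_pow_atTop_nhds_zero_of_norm_lt_one hq).mul_const t).pow n).const_mul _
  have hbound : ∀ᶠ N : ℕ in atTop, ∀ n, ‖qBinomCoeff q x n * (q ^ N * t) ^ n‖ ≤ C * ‖t‖ ^ n :=
    .of_forall fun N n => by
      rw [norm_mul, norm_pow]
      gcongr
      · exact (norm_nonneg _).trans (hC 0)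
      · exact hC n
      · rw [norm_mul, norm_pow]
        exact mul_le_of_le_one_left (norm_nonneg t) (pow_le_one₀ (norm_nonneg q) hq.le)
  have hlim := tendsto_tsum_of_dominated_convergence
    ((summable_geometric_of_lt_one (norm_nonneg t) ht).mul_left C) hterm hbound
  rwa [tsum_eq_single 0 fun n hn => by simp [hn], pow_zero, mul_one, qBinomCoeff_zero] at hlim

/-- The q-binomial theorem. -/
theorem qpgInf_mul_qBinomSeries (hq : ‖q‖ < 1) (x : ℂ) (ht : ‖t‖ < 1) :
    qpgInf q t * qBinomSeries q x t = qpgInf q (x * t) := by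
  have hleft := (tendsto_qpg_atTop hq t).mul_const (qBinomSeries q x t)
  have hright := (tendsto_qpg_atTop hq (x * t)).mul (tendsto_qBinomSeries_pow_mul hq x ht)
  rw [mul_one] at hright
  exact tendsto_nhds_unique (hleft.congr fun N => qpg_mul_qBinomSeries hq x ht N) hright

theorem qpgInf_mul_tsum_pow_div_qp (hq : ‖q‖ < 1) (ht : ‖t‖ < 1) :
    qpgInf q t * ∑' n, t ^ n / qp q n = 1 := by
  have hseries : qBinomSeries q 0 t = ∑' n, t ^ n / qp q n :=
    tsum_congr fun n => by simp [qBinomCoeff, qpg, inv_mul_eq_div]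
  have hone : qpgInf q 0 = 1 := by simp [qpgInf]
  simpa [hseries, hone] using qpgInf_mul_qBinomSeries hq 0 ht

theorem tsum_pow_mul_div_qp (hq : ‖q‖ < 1) {v : ℂ} (hv : ‖v‖ < 1) (m : ℕ) :
    ∑' n, (v * q ^ m) ^ n / qp q n = qpg q v m / qpgInf q v := by
  have hvm := qpgInf_ne_zero hq (norm_mul_pow_lt_one hq hv m)
  rw [qpgInf_eq_qpg_mul_qpgInf hq v m, eq_div_iff (mul_ne_zero (qpg_ne_zero hq hv m) hvm)]
  linear_combination qpg q v m * qpgInf_mul_tsum_pow_div_qp hq (norm_mul_pow_lt_one hq hv m)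

theorem tsum_tsum_pow_mul_pow_div_qp (hq : ‖q‖ < 1) {u v : ℂ} (hu : ‖u‖ < 1) (hv : ‖v‖ < 1) :
    ∑' (m : ℕ) (n : ℕ), q ^ (m * n) * u ^ m * v ^ n / (qp q m * qp q n)
      = qpgInf q (u * v) / (qpgInf q u * qpgInf q v) := by
  have hinner (m : ℕ) : ∑' n, q ^ (m * n) * u ^ m * v ^ n / (qp q m * qp q n)
      = qBinomCoeff q v m * u ^ m / qpgInf q v := by
    rw [qBinomCoeff, show qpg q v m / qp q m * u ^ m / qpgInf q v
        = u ^ m / qp q m * (qpg q v m / qpgInf q v) by ring,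
      ← tsum_pow_mul_div_qp hq hv m, ← tsum_mul_left]
    exact tsum_congr fun n => by rw [pow_mul, mul_pow]; ring
  rw [tsum_congr hinner, tsum_div_const, ← qBinomSeries, mul_comm u v,
    ← qpgInf_mul_qBinomSeries hq v hu, mul_div_mul_left _ _ (qpgInf_ne_zero hq hu)]

theorem framing_lemma_general (q : ℂ) (h1 : ‖q‖ < 1) (a b : ℕ) :
    ((∑' (n₁ : ℕ) (n₂ : ℕ),
        q ^ (n₁ * n₂ + (a + 1) * n₁ + (b + 1) * n₂) / (qp q n₁ * qp q n₂))
      = 1 / (qpg q (q ^ (b + 1)) (a + 1) * qpgInf q (q ^ (a + 1)))) ∧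
    ((∑' (n₁ : ℕ) (n₂ : ℕ),
        q ^ (n₁ * n₂ + (a + 1) * n₁ + (b + 1) * n₂) / (qp q n₁ * qp q n₂))
      = 1 / (qpg q (q ^ (a + 1)) (b + 1) * qpgInf q (q ^ (b + 1)))) := by
  set u := q ^ (a + 1)
  set v := q ^ (b + 1)
  have hu : ‖u‖ < 1 := norm_pow_succ_lt_one h1 a
  have hv : ‖v‖ < 1 := norm_pow_succ_lt_one h1 b
  have hsum : ∑' (n₁ : ℕ) (n₂ : ℕ),
      q ^ (n₁ * n₂ + (a + 1) * n₁ + (b + 1) * n₂) / (qp q n₁ * qp q n₂)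
        = qpgInf q (u * v) / (qpgInf q u * qpgInf q v) := by
    rw [← tsum_tsum_pow_mul_pow_div_qp h1 hu hv]
    exact tsum_congr fun m => tsum_congr fun n => by simp only [u, v, ← pow_mul, ← pow_add]
  have huv : qpgInf q (u * v) ≠ 0 := qpgInf_ne_zero h1 (norm_mul_pow_lt_one h1 hu (b + 1))
  have hsplit_u : qpgInf q u = qpg q u (b + 1) * qpgInf q (u * v) :=
    qpgInf_eq_qpg_mul_qpgInf h1 u (b + 1)
  have hsplit_v : qpgInf q v = qpg q v (a + 1) * qpgInf q (u * v) := by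
    rw [mul_comm u]; exact qpgInf_eq_qpg_mul_qpgInf h1 v (a + 1)
  rw [hsum]
  constructor
  · rw [hsplit_v]
    field_simp
  · rw [hsplit_u]
    field_simp

theorem framing_lemma (q : ℂ) (h0 : 0 < ‖q‖) (h1 : ‖q‖ < 1) (a b : ℕ) :
    ((∑' (n₁ : ℕ) (n₂ : ℕ),
        q ^ (n₁ * n₂ + (a + 1) * n₁ + (b + 1) * n₂) / (qp q n₁ * qp q n₂))
      = 1 / (qpg q (q ^ (b + 1)) (a + 1) * qpgInf q (q ^ (a + 1)))) ∧
    ((∑' (n₁ : ℕ) (n₂ : ℕ),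
        q ^ (n₁ * n₂ + (a + 1) * n₁ + (b + 1) * n₂) / (qp q n₁ * qp q n₂))
      = 1 / (qpg q (q ^ (a + 1)) (b + 1) * qpgInf q (q ^ (b + 1)))) :=
  framing_lemma_general q h1 a b
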